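/- arXiv:2212.00058 — 4 statements merged into one kernel-verified Lean document; each statement's English description precedes it below -/
import Mathlib

section
/- (Schoenberg / Young–Householder criterion, sufficiency direction) Let V = {v_1,...,v_S} be a finite set with a symmetric function d: V×V → ℝ≥0 with d(v,v)=0. Fix a reference index a, and define the S×S cosine law matrix M with entries M_{l,s} = (d(v_l,v_a)² + d(v_a,v_s)² − d(v_l,v_s)²)/2. If M is positive semi-definite, then there exist points x_1,...,x_S in ℝ^S such that ‖x_l − x_s‖ = d(v_l, v_s) for all l, s. -/
theorem stmt4 {S : ℕ} (hS : 2 ≤ S) (d : Fin S → Fin S → ℝ)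
    (hnn : ∀ l s, 0 ≤ d l s) (hsym : ∀ l s, d l s = d s l)
    (hdiag : ∀ l, d l l = 0) (a : Fin S)
    (M : Matrix (Fin S) (Fin S) ℝ)
    (hM : ∀ l s, M l s = (d l a ^ 2 + d a s ^ 2 - d l s ^ 2) / 2)
    (hPSD : M.PosSemidef) :
    ∃ x : Fin S → EuclideanSpace ℝ (Fin S), ∀ l s, ‖x l - x s‖ = d l s := by
  open scoped MatrixOrder in
  set B := CFC.sqrt M with hB
  have hBh : B.IsHermitian := by
    open scoped MatrixOrder in exact (Matrix.nonneg_iff_posSemidef.mp (CFC.sqrt_nonneg M)).isHermitian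
  set x : Fin S → EuclideanSpace ℝ (Fin S) :=
    fun l => (WithLp.equiv 2 (Fin S → ℝ)).symm (B l) with hx
  refine ⟨x, ?_⟩
  intro l s
  have hinner : ∀ p q : Fin S, @inner ℝ _ _ (x p) (x q) = M p q := by
    intro p q
    have hmul : (B * B) p q = M p q := by
      open scoped MatrixOrder in exact congrFun (congrFun (CFC.sqrt_mul_sqrt_self M hPSD.nonneg) p) q
    rw [← hmul, Matrix.mul_apply, PiLp.inner_apply]
    refine Finset.sum_congr rfl fun k _ => ?_
    have h1 : B p k = B k p := congrFun (congrFun hBh.symm p) k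
    have h2 : B q k = B k q := congrFun (congrFun hBh.symm q) k
    simp only [hx, RCLike.inner_apply, starRingEnd_apply, star_trivial, WithLp.equiv_symm_apply, WithLp.ofLp_toLp]
    rw [h1, h2, mul_comm]
  have hsq : ‖x l - x s‖ ^ 2 = d l s ^ 2 := by
    rw [← real_inner_self_eq_norm_sq, inner_sub_sub_self, hinner, hinner, hinner, hinner,
      hM, hM, hM, hM, hdiag, hdiag, hsym s l, hsym a s, hsym a l]
    ring
  nlinarith [hnn l s, norm_nonneg (x l - x s)]
end

section
/- The positive semi-definiteness of the cosine law matrix is independent of the choice of reference point: if d: V×V → ℝ≥0 is symmetric, vanishes on the diagonal, and for some reference index a the cosine law matrix M^a with entries (d(v_l,v_a)² + d(v_a,v_s)² − d(v_l,v_s)²)/2 is positive semi-definite, then for every other index b the matrix M^b is also positive semi-definite. -/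
theorem stmt6 {S : ℕ} (hS : 2 ≤ S) (d : Fin S → Fin S → ℝ)
    (hnn : ∀ l s, 0 ≤ d l s) (hsym : ∀ l s, d l s = d s l)
    (hdiag : ∀ l, d l l = 0) (a b : Fin S)
    (hPSD : (Matrix.of fun l s : Fin S =>
      (d l a ^ 2 + d a s ^ 2 - d l s ^ 2) / 2).PosSemidef) :
    (Matrix.of fun l s : Fin S =>
      (d l b ^ 2 + d b s ^ 2 - d l s ^ 2) / 2).PosSemidef := by
  set M : Matrix (Fin S) (Fin S) ℝ := Matrix.of fun l s : Fin S =>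
    (d l a ^ 2 + d a s ^ 2 - d l s ^ 2) / 2 with hM
  set P : Matrix (Fin S) (Fin S) ℝ := Matrix.of fun i j : Fin S =>
    (if i = j then (1:ℝ) else 0) - (if i = b then 1 else 0) with hP
  have key : (Matrix.of fun l s : Fin S =>
      (d l b ^ 2 + d b s ^ 2 - d l s ^ 2) / 2) = P.conjTranspose * M * P := by
    ext l s
    have h1 : ∀ i j, (M * P) i j = M i j - M i b := by
      intro i j
      simp only [Matrix.mul_apply, hP, Matrix.of_apply, mul_sub, mul_ite, mul_one, mul_zero]
      rw [Finset.sum_sub_distrib]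
      simp [eq_comm]
    have h2 : (P.conjTranspose * (M * P)) l s = (M * P) l s - (M * P) b s := by
      simp only [Matrix.mul_apply, Matrix.conjTranspose_apply, hP, Matrix.of_apply,
        star_trivial, sub_mul, ite_mul, one_mul, zero_mul]
      rw [Finset.sum_sub_distrib]
      simp
    rw [Matrix.mul_assoc, h2, h1 l s, h1 b s]
    simp only [hM, Matrix.of_apply]
    have hab : d a b = d b a := hsym a b
    have hlb : d l b = d b l := hsym l b
    have hbs : d b s = d s b := hsym b s
    ring_nf
    nlinarith [hsym a b, hsym l b, hsym b s, hdiag b, sq_nonneg (d b b)]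
  rw [key]
  exact hPSD.conjTranspose_mul_mul_same P
end

section
/- Let d: V×V → ℝ≥0 be realized by Euclidean points (i.e., there exist x_1,...,x_S ∈ ℝ^Q with d(v_l,v_s) = ‖x_l − x_s‖). Define for ε > 0 the perturbed function d_ε(v_l,v_s) = (d(v_l,v_s)² + ε)^{1/2} for l ≠ s and d_ε(v,v) = 0. Then d_ε is also realized by Euclidean points in ℝ^{Q+S}: explicitly, the points y_s = (x_s, √(ε/2) e_s) ∈ ℝ^Q × ℝ^S satisfy ‖y_l − y_s‖ = d_ε(v_l,v_s) for all l ≠ s. -/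
theorem stmt9 {S Q : ℕ} (x : Fin S → EuclideanSpace ℝ (Fin Q))
    (ε : ℝ) (hε : 0 < ε)
    (y : Fin S → EuclideanSpace ℝ (Fin Q ⊕ Fin S))
    (hy : ∀ s i, y s i = Sum.elim (x s)
      (fun j => if j = s then Real.sqrt (ε / 2) else 0) i) :
    ∀ l s, l ≠ s → ‖y l - y s‖ = Real.sqrt (‖x l - x s‖ ^ 2 + ε) := by
  intro l s hls
  set c := Real.sqrt (ε / 2) with hc
  have hc2 : c ^ 2 = ε / 2 := Real.sq_sqrt (by linarith)
  have h1 : ‖y l - y s‖ ^ 2 = ‖x l - x s‖ ^ 2 + ε := by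
    rw [EuclideanSpace.norm_eq, Real.sq_sqrt (by positivity)]
    simp only [PiLp.sub_apply, hy, Real.norm_eq_abs, sq_abs]
    rw [Fintype.sum_sum_type]
    have hA : ∑ i : Fin Q, (Sum.elim (x l) (fun j => if j = l then c else 0) (Sum.inl i)
        - Sum.elim (x s) (fun j => if j = s then c else 0) (Sum.inl i)) ^ 2
        = ‖x l - x s‖ ^ 2 := by
      rw [EuclideanSpace.norm_eq, Real.sq_sqrt (by positivity)]
      simp [PiLp.sub_apply, sq_abs]
    have hB : ∑ j : Fin S, (Sum.elim (x l) (fun j => if j = l then c else 0) (Sum.inr j)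
        - Sum.elim (x s) (fun j => if j = s then c else 0) (Sum.inr j)) ^ 2 = ε := by
      simp only [Sum.elim_inr]
      have key : ∀ j : Fin S, ((if j = l then c else 0) - (if j = s then c else 0)) ^ 2
          = (if j = l then c ^ 2 else 0) + (if j = s then c ^ 2 else 0) := by
        intro j
        by_cases h1 : j = l <;> by_cases h2 : j = s <;>
          simp_all
      rw [Finset.sum_congr rfl (fun j _ => key j), Finset.sum_add_distrib]
      simp [hc2]
    rw [hA, hB]
  have := congrArg Real.sqrt h1
  rwa [Real.sqrt_sq (norm_nonneg _)] at this
end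

section
/- Let X ⊂ ℝ^P be a finite set of M points and let Y be a finite set of N points with a symmetric non-negative function d_Y on Y vanishing on the diagonal (not necessarily Euclidean-realizable), and let f: X×Y → ℝ≥0 be an arbitrary function, not identically zero. Then there exists ε > 0 and points {x'_m} ∪ {y'_n} in ℝ^{M+N} such that ‖x'_m − x'_{m'}‖² = ‖x_m − x_{m'}‖² + ε for m ≠ m', ‖y'_n − y'_{n'}‖² = d_Y(y_n,y_{n'})² + ε for n ≠ n', and ‖x'_m − y'_n‖² = f(x_m,y_n)² + ε for all m, n. -/
open Finset Matrix in
theorem key_embed {ι : Type*} [Fintype ι] [DecidableEq ι] (i0 : ι) (D : ι → ι → ℝ)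
    (hsym : ∀ i j, D i j = D j i) (hdiag : ∀ i, D i i = 0) :
    ∃ ε > (0:ℝ), ∃ v : ι → EuclideanSpace ℝ ι,
      ∀ i j, i ≠ j → ‖v i - v j‖ ^ 2 = D i j + ε := by
  classical
  set B0 : ι → ι → ℝ := fun i j =>
    if i = i0 ∨ j = i0 then 0 else (D i i0 + D j i0 - D i j) / 2 with hB0
  set C : ℝ := ∑ i : ι, ∑ j : ι, |B0 i j| with hC
  have hC0 : 0 ≤ C := sum_nonneg fun i _ => sum_nonneg fun j _ => abs_nonneg _
  set ε : ℝ := 2 * C + 2 with hε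
  have hεpos : 0 < ε := by positivity
  set u : ι → ℝ := fun i => if i = i0 then 0 else 1 with hu
  set Bm : Matrix ι ι ℝ := Matrix.of (fun i j =>
    B0 i j + (ε / 2) * ((if i = j then u i else 0) + u i * u j)) with hBm
  have hB0symm : ∀ i j, B0 i j = B0 j i := by
    intro i j
    simp only [hB0]
    by_cases hi : i = i0 <;> by_cases hj : j = i0 <;> simp [hi, hj]
    rw [hsym i j]; ring
  have hBmPSD : Bm.PosSemidef := by
    refine Matrix.posSemidef_iff_dotProduct_mulVec.mpr ⟨?_, ?_⟩
    · ext i j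
      simp only [Matrix.conjTranspose_apply, hBm, Matrix.of_apply, star_trivial]
      rw [hB0symm j i]
      by_cases h : i = j
      · subst h; ring
      · rw [if_neg h, if_neg (fun hh => h hh.symm)]; ring
    · intro z
      set S : ℝ := ∑ i, u i * z i ^ 2 with hS
      set T : ℝ := ∑ i, u i * z i with hT
      have hS0 : 0 ≤ S := by
        refine sum_nonneg fun i _ => mul_nonneg ?_ (sq_nonneg _)
        simp only [hu]; split <;> norm_num
      have hzS : ∀ i, i ≠ i0 → z i ^ 2 ≤ S := by
        intro i hi
        have : u i * z i ^ 2 ≤ S :=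
          single_le_sum (f := fun i => u i * z i ^ 2)
            (fun k _ => mul_nonneg (by simp only [hu]; split <;> norm_num) (sq_nonneg _))
            (mem_univ i)
        simpa [hu, hi] using this
      have expand : dotProduct (star z) (Bm *ᵥ z)
          = (∑ i, ∑ j, z i * B0 i j * z j) + (ε / 2) * S + (ε / 2) * T ^ 2 := by
        simp only [dotProduct, Matrix.mulVec, dotProduct, Pi.star_apply,
          star_trivial, hBm, Matrix.of_apply, Finset.mul_sum]
        have : ∀ i : ι, ∑ j, z i * ((B0 i j + ε / 2 * ((if i = j then u i else 0) + u i * u j)) * z j)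
            = (∑ j, z i * B0 i j * z j) + (ε / 2) * (u i * z i ^ 2)
              + (ε / 2) * ((u i * z i) * ∑ j, u j * z j) := by
          intro i
          rw [Finset.sum_congr rfl (fun j _ => show
              z i * ((B0 i j + ε / 2 * ((if i = j then u i else 0) + u i * u j)) * z j)
              = z i * B0 i j * z j + (ε/2) * (if i = j then u i * (z i * z j) else 0)
                + (ε/2) * ((u i * z i) * (u j * z j)) by
            by_cases h : i = j <;> simp [h] <;> ring)]
          rw [Finset.sum_add_distrib, Finset.sum_add_distrib]
          simp only [← Finset.mul_sum]
          rw [Finset.sum_ite_eq univ i (fun j => u i * (z i * z j))]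
          simp only [mem_univ, if_true]
          ring
        rw [Finset.sum_congr rfl (fun i _ => this i), Finset.sum_add_distrib,
          Finset.sum_add_distrib, ← Finset.mul_sum, ← Finset.mul_sum, ← hS,
          ← Finset.sum_mul, ← hT]
        ring
      have hQ0 : -(C * S) ≤ ∑ i, ∑ j, z i * B0 i j * z j := by
        have hterm : ∀ i j : ι, -(|B0 i j| * S) ≤ z i * B0 i j * z j := by
          intro i j
          by_cases h : i = i0 ∨ j = i0
          · have : B0 i j = 0 := by simp only [hB0]; rw [if_pos h]
            simp [this]
          · push_neg at h
            have h1 := hzS i h.1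
            have h2 := hzS j h.2
            have h3 : |z i| * |z j| ≤ S := by
              nlinarith [sq_nonneg (|z i| - |z j|), sq_abs (z i), sq_abs (z j)]
            have h4 := neg_abs_le (z i * B0 i j * z j)
            have h5 : |z i * B0 i j * z j| ≤ |B0 i j| * S := by
              rw [abs_mul, abs_mul]
              nlinarith [abs_nonneg (B0 i j), abs_nonneg (z i), abs_nonneg (z j)]
            linarith
        calc -(C * S) = ∑ i, ∑ j, -(|B0 i j| * S) := by
              simp only [hC, Finset.sum_mul, Finset.sum_neg_distrib]
            _ ≤ ∑ i, ∑ j, z i * B0 i j * z j :=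
              Finset.sum_le_sum fun i _ => Finset.sum_le_sum fun j _ => hterm i j
      rw [expand, hε]
      nlinarith [sq_nonneg T, hS0, hQ0, hC0]
  obtain ⟨Cm, hCm⟩ : ∃ Cm : Matrix ι ι ℝ, Bm = Cmᴴ * Cm := by
    open scoped MatrixOrder Matrix.Norms.L2Operator in
    obtain ⟨C, hC⟩ := CStarAlgebra.nonneg_iff_eq_star_mul_self.mp (Matrix.nonneg_iff_posSemidef.mpr hBmPSD)
    exact ⟨C, hC⟩
  set v : ι → EuclideanSpace ℝ ι := fun i => WithLp.toLp 2 (fun k => Cm k i) with hv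
  refine ⟨ε, hεpos, v, ?_⟩
  intro i j hij
  have hnormsq : ‖v i - v j‖ ^ 2 = ∑ k, (Cm k i - Cm k j) ^ 2 := by
    rw [EuclideanSpace.norm_eq, Real.sq_sqrt (by positivity)]
    refine Finset.sum_congr rfl fun k _ => ?_
    rw [Real.norm_eq_abs, sq_abs]
    rfl
  have hgram : ∀ a b, Bm a b = ∑ k, Cm k a * Cm k b := by
    intro a b
    rw [hCm]
    simp [Matrix.mul_apply, Matrix.conjTranspose_apply]
  have hexp : ‖v i - v j‖ ^ 2 = Bm i i + Bm j j - 2 * Bm i j := by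
    rw [hnormsq, hgram, hgram, hgram, Finset.mul_sum, ← Finset.sum_add_distrib,
      ← Finset.sum_sub_distrib]
    exact Finset.sum_congr rfl fun k _ => by ring
  have hBmdiag : ∀ a, Bm a a = if a = i0 then 0 else D a i0 + ε := by
    intro a
    simp only [hBm, Matrix.of_apply, hB0, hu]
    by_cases h : a = i0 <;> simp [h, hdiag] <;> ring
  have hBmoff : ∀ a b, a ≠ b → Bm a b
      = if a = i0 ∨ b = i0 then 0 else (D a i0 + D b i0 - D a b) / 2 + ε / 2 := by
    intro a b hab
    simp only [hBm, Matrix.of_apply, hB0, hu, if_neg hab]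
    by_cases ha : a = i0 <;> by_cases hb : b = i0
    · exact absurd (ha.trans hb.symm) hab
    · simp [ha, hb]
    · simp [ha, hb]
    · simp [ha, hb]
  rw [hexp, hBmdiag i, hBmdiag j, hBmoff i j hij]
  by_cases hi : i = i0
  · have hj : j ≠ i0 := fun h => hij (hi.trans h.symm)
    rw [if_pos hi, if_neg hj, if_pos (Or.inl hi), hi, hsym i0 j]
    ring
  · by_cases hj : j = i0
    · rw [if_neg hi, if_pos hj, if_pos (Or.inr hj), hj]
      ring
    · rw [if_neg hi, if_neg hj, if_neg (by tauto)]
      ring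

theorem stmt10 {P M N : ℕ} (hM : 0 < M) (hN : 0 < N)
    (x : Fin M → EuclideanSpace ℝ (Fin P))
    (dY : Fin N → Fin N → ℝ)
    (hdY : ∀ n n', 0 ≤ dY n n') (hdYs : ∀ n n', dY n n' = dY n' n)
    (hdYd : ∀ n, dY n n = 0)
    (f : Fin M → Fin N → ℝ) (hf : ∀ m n, 0 ≤ f m n)
    (hfne : ∃ m n, f m n ≠ 0) :
    ∃ ε > (0 : ℝ),
      ∃ x' : Fin M → EuclideanSpace ℝ (Fin (M + N)),
      ∃ y' : Fin N → EuclideanSpace ℝ (Fin (M + N)),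
        (∀ m m', m ≠ m' → ‖x' m - x' m'‖ ^ 2 = ‖x m - x m'‖ ^ 2 + ε) ∧
        (∀ n n', n ≠ n' → ‖y' n - y' n'‖ ^ 2 = dY n n' ^ 2 + ε) ∧
        (∀ m n, ‖x' m - y' n‖ ^ 2 = f m n ^ 2 + ε) := by
  classical
  set D : (Fin M ⊕ Fin N) → (Fin M ⊕ Fin N) → ℝ := fun i j =>
    match i, j with
    | Sum.inl m, Sum.inl m' => ‖x m - x m'‖ ^ 2
    | Sum.inl m, Sum.inr n => f m n ^ 2
    | Sum.inr n, Sum.inl m => f m n ^ 2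
    | Sum.inr n, Sum.inr n' => dY n n' ^ 2 with hD
  have hsym : ∀ i j, D i j = D j i := by
    rintro (m | n) (m' | n') <;> simp only [hD]
    · rw [norm_sub_rev]
    · rw [hdYs]
  have hdiag : ∀ i, D i i = 0 := by
    rintro (m | n) <;> simp [hD, hdYd]
  obtain ⟨ε, hεpos, v, hv⟩ := key_embed (Sum.inl ⟨0, hM⟩) D hsym hdiag
  set L : EuclideanSpace ℝ (Fin M ⊕ Fin N) ≃ₗᵢ[ℝ] EuclideanSpace ℝ (Fin (M + N)) :=
    LinearIsometryEquiv.piLpCongrLeft 2 ℝ ℝ finSumFinEquiv with hL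
  refine ⟨ε, hεpos, fun m => L (v (Sum.inl m)), fun n => L (v (Sum.inr n)), ?_, ?_, ?_⟩
  · intro m m' hmm
    rw [← L.map_sub, L.norm_map, hv _ _ (by simp [hmm])]
  · intro n n' hnn
    rw [← L.map_sub, L.norm_map, hv _ _ (by simp [hnn])]
  · intro m n
    rw [← L.map_sub, L.norm_map, hv _ _ (by simp)]
end
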